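/- A subset X of G is a maximal C-subset if and only if either there exists a k-dimensional subspace S of V with X = {(S',U') ∈ G : S' = S}, or there exists an (n−k)-dimensional subspace U of V with X = {(S',U') ∈ G : U' = U}. -/

import Mathlib

/-!
Two distinct close pairs share exactly one coordinate, and a pair close to both of them shares
that same coordinate; hence a C-subset with two elements lies in a fibre `{p | p.1 = S}` or
`{p | p.2 = U}`, and these fibres are C-subsets. Every fibre contains two pairs, because a
subspace `S ≠ 0, V` has more than one complement: adding to the projection onto `S` a nonzero
map `V → S` vanishing on `S` gives another projection onto `S`, with a different kernel. So the
fibres are maximal, and a maximal C-subset, which cannot be a singleton or empty, is a fibre.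
-/

open Module

variable (K V : Type*) [DivisionRing K] [AddCommGroup V] [Module K V]

/-- Two subspaces `P`, `T` are adjacent: `dim P = dim T = dim (P ⊓ T) + 1`. -/
def SubAdj (P T : Submodule K V) : Prop :=
  finrank K P = finrank K T ∧ finrank K P = finrank K ↥(P ⊓ T) + 1

/-- Two subspaces are complementary. -/
def SubCompl (S U : Submodule K V) : Prop := S ⊓ U = ⊥ ∧ S ⊔ U = ⊤

/-- The set 𝒢 of pairs of complementary subspaces of dimensions `k` and `n - k`. -/
def GSet (n k : ℕ) : Set (Submodule K V × Submodule K V) :=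
  {p | finrank K p.1 = k ∧ finrank K p.2 = n - k ∧ SubCompl K V p.1 p.2}

/-- Adjacency of pairs. -/
def PairAdj (p q : Submodule K V × Submodule K V) : Prop :=
  (p.1 = q.1 ∧ SubAdj K V p.2 q.2) ∨ (SubAdj K V p.1 q.1 ∧ p.2 = q.2)

/-- Closeness of pairs. -/
def PairClose (p q : Submodule K V × Submodule K V) : Prop :=
  (p.1 = q.1 ∧ p.2 ≠ q.2) ∨ (p.1 ≠ q.1 ∧ p.2 = q.2)

/-- A C-subset: a subset of 𝒢 any two distinct elements of which are close. -/
def IsCSubset (n k : ℕ) (X : Set (Submodule K V × Submodule K V)) : Prop :=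
  X ⊆ GSet K V n k ∧ ∀ p ∈ X, ∀ q ∈ X, p ≠ q → PairClose K V p q

/-- A maximal C-subset: a C-subset not properly contained in any C-subset. -/
def IsMaxCSubset (n k : ℕ) (X : Set (Submodule K V × Submodule K V)) : Prop :=
  IsCSubset K V n k X ∧ ¬ ∃ Y, IsCSubset K V n k Y ∧ X ⊂ Y

variable {K V}

theorem Submodule.exists_isCompl_ne {S U : Submodule K V} (hS : S ≠ ⊥) (hU : U ≠ ⊥)
    (hc : IsCompl S U) : ∃ U', U' ≠ U ∧ IsCompl S U' := by
  obtain ⟨s, hs, hs0⟩ := S.exists_mem_ne_zero_of_ne_bot hS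
  have hStop : S < ⊤ := lt_top_iff_ne_top.2 fun h => hU (by simpa [h] using hc.disjoint)
  obtain ⟨φ, hφ0, hSφ⟩ := S.exists_le_ker_of_lt_top hStop
  set ψ : V →ₗ[K] S := LinearMap.toSpanSingleton K S ⟨s, hs⟩ ∘ₗ φ
  have hψS : ∀ x : S, ψ x = 0 := fun x => by simp [ψ, LinearMap.mem_ker.1 (hSφ x.2)]
  have hψ0 : ψ ≠ 0 := by
    obtain ⟨v, hv⟩ := DFunLike.ne_iff.1 hφ0
    refine DFunLike.ne_iff.2 ⟨v, ?_⟩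
    simpa [ψ, Subtype.ext_iff, hs0] using hv
  set f := S.projectionOnto U hc + ψ
  have hf : ∀ x : S, f x = x := fun x => by
    simp [f, hψS, Submodule.projectionOnto_apply_left]
  refine ⟨LinearMap.ker f, fun hU' => hψ0 ?_, LinearMap.isCompl_of_proj hf⟩
  have hproj : ∀ (W : Submodule K V) (hW : IsCompl S W), W = U →
      S.projectionOnto W hW = S.projectionOnto U hc := by
    rintro W hW rfl
    rfl
  have hfU : f = S.projectionOnto U hc :=
    (LinearMap.projectionOnto_of_proj f hf).symm.trans (hproj _ _ hU')
  simpa [f] using hfU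

theorem subCompl_iff_isCompl {S U : Submodule K V} : SubCompl K V S U ↔ IsCompl S U :=
  ⟨fun ⟨h₁, h₂⟩ => ⟨disjoint_iff.2 h₁, codisjoint_iff.2 h₂⟩,
    fun h => ⟨h.disjoint.eq_bot, h.codisjoint.eq_top⟩⟩

section GSet

variable [FiniteDimensional K V] {n k : ℕ}

theorem mk_mem_GSet_iff_finrank_fst (hV : finrank K V = n) {S U : Submodule K V} :
    (S, U) ∈ GSet K V n k ↔ finrank K S = k ∧ IsCompl S U := by
  refine ⟨fun h => ⟨h.1, subCompl_iff_isCompl.1 h.2.2⟩, fun ⟨hS, hc⟩ => ?_⟩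
  have := Submodule.finrank_add_eq_of_isCompl hc
  exact ⟨hS, show finrank K U = n - k by omega, subCompl_iff_isCompl.2 hc⟩

theorem mk_mem_GSet_iff_finrank_snd (hV : finrank K V = n) (hkn : k ≤ n)
    {S U : Submodule K V} :
    (S, U) ∈ GSet K V n k ↔ finrank K U = n - k ∧ IsCompl S U := by
  refine ⟨fun h => ⟨h.2.1, subCompl_iff_isCompl.1 h.2.2⟩, fun ⟨hU, hc⟩ => ?_⟩
  have := Submodule.finrank_add_eq_of_isCompl hc
  exact ⟨show finrank K S = k by omega, hU, subCompl_iff_isCompl.2 hc⟩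

theorem GSet_nonempty (hV : finrank K V = n) (hkn : k ≤ n) : (GSet K V n k).Nonempty := by
  obtain ⟨b, hb⟩ := exists_linearIndependent_of_le_finrank (R := K) (M := V) (hV ▸ hkn)
  obtain ⟨U, hc⟩ := (Submodule.span K (Set.range b)).exists_isCompl
  refine ⟨_, (mk_mem_GSet_iff_finrank_fst hV).2 ⟨?_, hc⟩⟩
  rw [finrank_span_eq_card hb, Fintype.card_fin]

variable (hV : finrank K V = n) (hk₁ : 1 ≤ k) (hk₂ : k ≤ n - 1)
include hV hk₁ hk₂

theorem exists_mem_GSet_ne_fst_eq {p : Submodule K V × Submodule K V}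
    (hp : p ∈ GSet K V n k) : ∃ q ∈ GSet K V n k, q ≠ p ∧ q.1 = p.1 := by
  obtain ⟨hS, hU, hc⟩ := hp
  obtain ⟨U', hU'ne, hc'⟩ := Submodule.exists_isCompl_ne
    (Submodule.one_le_finrank_iff.1 (by omega)) (Submodule.one_le_finrank_iff.1 (by omega))
    (subCompl_iff_isCompl.1 hc)
  exact ⟨(p.1, U'), (mk_mem_GSet_iff_finrank_fst hV).2 ⟨hS, hc'⟩,
    fun h => hU'ne (congrArg Prod.snd h), rfl⟩

theorem exists_mem_GSet_ne_snd_eq {p : Submodule K V × Submodule K V}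
    (hp : p ∈ GSet K V n k) : ∃ q ∈ GSet K V n k, q ≠ p ∧ q.2 = p.2 := by
  obtain ⟨hS, hU, hc⟩ := hp
  obtain ⟨S', hS'ne, hc'⟩ := Submodule.exists_isCompl_ne
    (Submodule.one_le_finrank_iff.1 (by omega)) (Submodule.one_le_finrank_iff.1 (by omega))
    (subCompl_iff_isCompl.1 hc).symm
  exact ⟨(S', p.2), (mk_mem_GSet_iff_finrank_snd hV (by omega)).2 ⟨hU, hc'.symm⟩,
    fun h => hS'ne (congrArg Prod.fst h), rfl⟩

end GSet

section CSubset

variable {n k : ℕ} {X : Set (Submodule K V × Submodule K V)} {p q r : Submodule K V × Submodule K V}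

theorem pairClose_of_fst_eq (hpq : p ≠ q) (h : p.1 = q.1) : PairClose K V p q :=
  Or.inl ⟨h, fun h₂ => hpq (Prod.ext h h₂)⟩

theorem pairClose_of_snd_eq (hpq : p ≠ q) (h : p.2 = q.2) : PairClose K V p q :=
  Or.inr ⟨fun h₁ => hpq (Prod.ext h₁ h), h⟩

theorem fst_eq_of_pairwise_pairClose (hX : X.Pairwise (PairClose K V)) (hp : p ∈ X)
    (hq : q ∈ X) (hpq : p ≠ q) (h : p.1 = q.1) (hr : r ∈ X) : r.1 = p.1 := by
  by_contra hr₁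
  have hrp : r ≠ p := by rintro rfl; exact hr₁ rfl
  have hrq : r ≠ q := by rintro rfl; exact hr₁ h.symm
  have hp₂ : r.2 = p.2 := ((hX hr hp hrp).resolve_left fun h' => hr₁ h'.1).2
  have hq₂ : r.2 = q.2 := ((hX hr hq hrq).resolve_left fun h' => hr₁ (h'.1.trans h.symm)).2
  exact hpq (Prod.ext h (hp₂.symm.trans hq₂))

theorem snd_eq_of_pairwise_pairClose (hX : X.Pairwise (PairClose K V)) (hp : p ∈ X)
    (hq : q ∈ X) (hpq : p ≠ q) (h : p.2 = q.2) (hr : r ∈ X) : r.2 = p.2 := by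
  by_contra hr₂
  have hrp : r ≠ p := by rintro rfl; exact hr₂ rfl
  have hrq : r ≠ q := by rintro rfl; exact hr₂ h.symm
  have hp₁ : r.1 = p.1 := ((hX hr hp hrp).resolve_right fun h' => hr₂ h'.2).1
  have hq₁ : r.1 = q.1 := ((hX hr hq hrq).resolve_right fun h' => hr₂ (h'.2.trans h.symm)).1
  exact hpq (Prod.ext (hp₁.symm.trans hq₁) h)

theorem isCSubset_fst_fiber (S : Submodule K V) :
    IsCSubset K V n k {p ∈ GSet K V n k | p.1 = S} :=
  ⟨Set.sep_subset _ _, fun _ hp _ hq hpq => pairClose_of_fst_eq hpq (hp.2.trans hq.2.symm)⟩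

theorem isCSubset_snd_fiber (U : Submodule K V) :
    IsCSubset K V n k {p ∈ GSet K V n k | p.2 = U} :=
  ⟨Set.sep_subset _ _, fun _ hp _ hq hpq => pairClose_of_snd_eq hpq (hp.2.trans hq.2.symm)⟩

theorem IsMaxCSubset.eq_of_subset {Y : Set (Submodule K V × Submodule K V)}
    (hX : IsMaxCSubset K V n k X) (hY : IsCSubset K V n k Y) (hXY : X ⊆ Y) : X = Y :=
  by_contra fun h => hX.2 ⟨Y, hY, hXY.ssubset_of_ne h⟩

theorem IsMaxCSubset.eq_fst_fiber_or_eq_snd_fiber (hX : IsMaxCSubset K V n k X)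
    (hp : p ∈ X) (hq : q ∈ X) (hpq : p ≠ q) :
    X = {r ∈ GSet K V n k | r.1 = p.1} ∨ X = {r ∈ GSet K V n k | r.2 = p.2} := by
  obtain ⟨hXG, hXclose⟩ := hX.1
  rcases hXclose p hp q hq hpq with ⟨h₁, -⟩ | ⟨-, h₂⟩
  · exact Or.inl <| hX.eq_of_subset (isCSubset_fst_fiber _) fun r hr =>
      ⟨hXG hr, fst_eq_of_pairwise_pairClose hXclose hp hq hpq h₁ hr⟩
  · exact Or.inr <| hX.eq_of_subset (isCSubset_snd_fiber _) fun r hr =>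
      ⟨hXG hr, snd_eq_of_pairwise_pairClose hXclose hp hq hpq h₂ hr⟩

variable [FiniteDimensional K V] (hV : finrank K V = n) (hk₁ : 1 ≤ k) (hk₂ : k ≤ n - 1)
include hV hk₁ hk₂

theorem isMaxCSubset_fst_fiber (hp : p ∈ GSet K V n k) :
    IsMaxCSubset K V n k {r ∈ GSet K V n k | r.1 = p.1} := by
  refine ⟨isCSubset_fst_fiber _, fun ⟨Y, ⟨hYG, hYclose⟩, hXY⟩ => hXY.2 fun r hr => ⟨hYG hr, ?_⟩⟩
  obtain ⟨q, hq, hqp, hq₁⟩ := exists_mem_GSet_ne_fst_eq hV hk₁ hk₂ hp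
  exact fst_eq_of_pairwise_pairClose hYclose (hXY.1 ⟨hp, rfl⟩) (hXY.1 ⟨hq, hq₁⟩)
    hqp.symm hq₁.symm hr

theorem isMaxCSubset_snd_fiber (hp : p ∈ GSet K V n k) :
    IsMaxCSubset K V n k {r ∈ GSet K V n k | r.2 = p.2} := by
  refine ⟨isCSubset_snd_fiber _, fun ⟨Y, ⟨hYG, hYclose⟩, hXY⟩ => hXY.2 fun r hr => ⟨hYG hr, ?_⟩⟩
  obtain ⟨q, hq, hqp, hq₂⟩ := exists_mem_GSet_ne_snd_eq hV hk₁ hk₂ hp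
  exact snd_eq_of_pairwise_pairClose hYclose (hXY.1 ⟨hp, rfl⟩) (hXY.1 ⟨hq, hq₂⟩)
    hqp.symm hq₂.symm hr

theorem IsMaxCSubset.nontrivial (hX : IsMaxCSubset K V n k X) : X.Nontrivial := by
  by_contra hX₁
  obtain ⟨p, hp, hXp⟩ : ∃ p ∈ GSet K V n k, X ⊆ {p} := by
    rcases (Set.not_nontrivial_iff.1 hX₁).eq_empty_or_singleton with rfl | ⟨p, rfl⟩
    · obtain ⟨p, hp⟩ := GSet_nonempty hV (by omega : k ≤ n)
      exact ⟨p, hp, Set.empty_subset _⟩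
    · exact ⟨p, hX.1.1 rfl, subset_rfl⟩
  obtain ⟨q, hq, hqp, hq₁⟩ := exists_mem_GSet_ne_fst_eq hV hk₁ hk₂ hp
  have hXeq := hX.eq_of_subset (isCSubset_fst_fiber p.1)
    (hXp.trans (Set.singleton_subset_iff.2 ⟨hp, rfl⟩))
  exact hX₁ (hXeq ▸ ⟨p, ⟨hp, rfl⟩, q, ⟨hq, hq₁⟩, hqp.symm⟩)

end CSubset

theorem maximal_C_subsets_general
    {K V : Type*} [DivisionRing K] [AddCommGroup V] [Module K V]
    [FiniteDimensional K V] {n k : ℕ} (hV : finrank K V = n)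
    (hk1 : 1 ≤ k) (hk2 : k ≤ n - 1)
    (X : Set (Submodule K V × Submodule K V)) :
    IsMaxCSubset K V n k X ↔
      ((∃ S : Submodule K V, finrank K S = k ∧
          X = {p ∈ GSet K V n k | p.1 = S}) ∨
       (∃ U : Submodule K V, finrank K U = n - k ∧
          X = {p ∈ GSet K V n k | p.2 = U})) := by
  constructor
  · intro hX
    obtain ⟨p, hp, q, hq, hpq⟩ := hX.nontrivial hV hk1 hk2
    have hpG := hX.1.1 hp
    exact (hX.eq_fst_fiber_or_eq_snd_fiber hp hq hpq).imp
      (fun h => ⟨p.1, hpG.1, h⟩) (fun h => ⟨p.2, hpG.2.1, h⟩)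
  · rintro (⟨S, hS, rfl⟩ | ⟨U, hU, rfl⟩)
    · obtain ⟨U, hc⟩ := S.exists_isCompl
      exact isMaxCSubset_fst_fiber hV hk1 hk2 ((mk_mem_GSet_iff_finrank_fst hV).2 ⟨hS, hc⟩)
    · obtain ⟨S, hc⟩ := U.exists_isCompl
      exact isMaxCSubset_snd_fiber hV hk1 hk2
        ((mk_mem_GSet_iff_finrank_snd hV (by omega)).2 ⟨hU, hc.symm⟩)

/-- The maximal C-subsets of 𝒢 are exactly the sets 𝒢(S,V) with `dim S = k` and
the sets 𝒢(V,U) with `dim U = n - k`. -/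
theorem maximal_C_subsets
    {K V : Type*} [DivisionRing K] [AddCommGroup V] [Module K V]
    [FiniteDimensional K V] {n k : ℕ} (hn : 2 ≤ n) (hV : finrank K V = n)
    (hk1 : 1 ≤ k) (hk2 : k ≤ n - 1)
    (X : Set (Submodule K V × Submodule K V)) :
    IsMaxCSubset K V n k X ↔
      ((∃ S : Submodule K V, finrank K S = k ∧
          X = {p ∈ GSet K V n k | p.1 = S}) ∨
       (∃ U : Submodule K V, finrank K U = n - k ∧
          X = {p ∈ GSet K V n k | p.2 = U})) :=
  maximal_C_subsets_general hV hk1 hk2 X
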